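/- Let n ≥ 2 and ρ ∈ (0,1). For x ∈ ℝ^n define the top-k cumulative softmax mass C_k(x) = max over subsets S ⊆ Fin n with |S| = k of Σ_{a∈S} σ(x)_a, where σ is the softmax on ℝ^n, and define the selected anchor count k*(x) = min{k ∈ {1,…,n} : C_k(x) ≥ ρ} (this minimum exists since C_n(x) = 1 > ρ). Suppose ℓ ∈ ℝ^n has pairwise distinct coordinates and C_k(ℓ) ≠ ρ for every k ∈ {1,…,n}. Then there exists an open neighborhood U of ℓ on which k* is constant. -/
import Mathlib


/-- The softmax map on `ℝ^n`: `softmax s a = exp (s a) / ∑ b, exp (s b)`. -/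
noncomputable def softmax {n : ℕ} (s : Fin n → ℝ) : Fin n → ℝ :=
  fun a => Real.exp (s a) / ∑ b, Real.exp (s b)

/-- Top-`k` cumulative softmax mass: the maximum over subsets `S ⊆ Fin n` of size `k`
of the softmax mass of `S`. -/
noncomputable def cumMass {n : ℕ} (k : ℕ) (x : Fin n → ℝ) : ℝ :=
  sSup {r : ℝ | ∃ S : Finset (Fin n), S.card = k ∧ r = ∑ a ∈ S, softmax x a}

/-- The mass-based anchor count: `k*(x) = min {k ∈ {1,…,n} : cumMass k x ≥ ρ}`. -/
noncomputable def kstar {n : ℕ} (ρ : ℝ) (x : Fin n → ℝ) : ℕ :=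
  sInf {k : ℕ | 1 ≤ k ∧ k ≤ n ∧ ρ ≤ cumMass k x}

lemma softmax_continuous {n : ℕ} (hn : 0 < n) (a : Fin n) :
    Continuous (fun x : Fin n → ℝ => softmax x a) := by
  apply Continuous.div
  · exact (Real.continuous_exp).comp (continuous_apply a)
  · exact continuous_finset_sum _ fun b _ => (Real.continuous_exp).comp (continuous_apply b)
  · intro x
    have h0 : 0 < ∑ b, Real.exp (x b) := by
      apply Finset.sum_pos (fun b _ => Real.exp_pos _)
      exact Finset.univ_nonempty_iff.mpr (Fin.pos_iff_nonempty.mp hn)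
    exact ne_of_gt h0

lemma powersetCard_nonempty' {n k : ℕ} (hk : k ≤ n) :
    ((Finset.univ : Finset (Fin n)).powersetCard k).Nonempty := by
  rw [Finset.powersetCard_nonempty]
  simpa using hk

lemma cumMass_eq {n : ℕ} {k : ℕ} (hk : k ≤ n) (x : Fin n → ℝ) :
    cumMass k x = ((Finset.univ : Finset (Fin n)).powersetCard k).sup'
      (powersetCard_nonempty' hk) (fun S => ∑ a ∈ S, softmax x a) := by
  rw [Finset.sup'_eq_csSup_image]
  unfold cumMass
  congr 1
  ext r
  constructor
  · rintro ⟨S, hS, rfl⟩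
    exact ⟨S, by simp [Finset.mem_powersetCard, hS], rfl⟩
  · rintro ⟨S, hS, rfl⟩
    exact ⟨S, (Finset.mem_powersetCard.mp hS).2, rfl⟩

lemma cumMass_continuous {n : ℕ} {k : ℕ} (hn : 0 < n) (hk : k ≤ n) :
    Continuous (fun x : Fin n → ℝ => cumMass k x) := by
  have : Continuous (fun x : Fin n → ℝ =>
      ((Finset.univ : Finset (Fin n)).powersetCard k).sup'
        (powersetCard_nonempty' hk) (fun S => ∑ a ∈ S, softmax x a)) := by
    apply Continuous.finset_sup'_apply
    intro S _
    exact continuous_finset_sum _ fun a _ => softmax_continuous hn a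
  convert this using 1
  ext x
  exact cumMass_eq hk x

/-- Away from the boundary set (no ties among coordinates and no cumulative top-`k`
softmax mass exactly equal to `ρ`), the mass-based anchor count `k*` is locally
constant. -/
theorem kstar_locally_constant (n : ℕ) (hn : 2 ≤ n) (ρ : ℝ)
    (hρ : ρ ∈ Set.Ioo (0 : ℝ) 1) (ℓ : Fin n → ℝ) (hℓ : Function.Injective ℓ)
    (hno : ∀ k, 1 ≤ k → k ≤ n → cumMass k ℓ ≠ ρ) :
    ∃ U : Set (Fin n → ℝ), IsOpen U ∧ ℓ ∈ U ∧ ∀ x ∈ U, kstar ρ x = kstar ρ ℓ := by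
  have hn0 : 0 < n := by omega
  -- for each k in [1,n], choose an open set preserving the strict comparison
  let V : ℕ → Set (Fin n → ℝ) := fun k =>
    if ρ < cumMass k ℓ then {x | ρ < cumMass k x} else {x | cumMass k x < ρ}
  have hV : ∀ k ∈ Finset.Icc 1 n, IsOpen (V k) ∧ ℓ ∈ V k ∧
      ∀ x ∈ V k, (ρ ≤ cumMass k x ↔ ρ ≤ cumMass k ℓ) := by
    intro k hk
    rw [Finset.mem_Icc] at hk
    have hc := cumMass_continuous (k := k) hn0 hk.2
    by_cases h : ρ < cumMass k ℓ
    · refine ⟨?_, ?_, ?_⟩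
      · simp only [V, if_pos h]
        exact isOpen_lt continuous_const hc
      · simp only [V, if_pos h]; exact h
      · intro x hx
        simp only [V, if_pos h, Set.mem_setOf_eq] at hx
        simp [le_of_lt hx, le_of_lt h]
    · have h' : cumMass k ℓ < ρ := lt_of_le_of_ne (not_lt.mp h) (hno k hk.1 hk.2)
      refine ⟨?_, ?_, ?_⟩
      · simp only [V, if_neg h]
        exact isOpen_lt hc continuous_const
      · simp only [V, if_neg h]; exact h'
      · intro x hx
        simp only [V, if_neg h, Set.mem_setOf_eq] at hx
        simp [not_le.mpr hx, not_le.mpr h']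
  refine ⟨⋂ k ∈ Finset.Icc 1 n, V k, ?_, ?_, ?_⟩
  · exact isOpen_biInter_finset fun k hk => (hV k hk).1
  · exact Set.mem_biInter fun k hk => (hV k hk).2.1
  · intro x hx
    unfold kstar
    congr 1
    ext k
    simp only [Set.mem_setOf_eq]
    constructor
    · rintro ⟨h1, h2, h3⟩
      refine ⟨h1, h2, ?_⟩
      have hk : k ∈ Finset.Icc 1 n := Finset.mem_Icc.mpr ⟨h1, h2⟩
      exact ((hV k hk).2.2 x ((by exact Set.mem_iInter₂.mp hx k hk))).mp h3
    · rintro ⟨h1, h2, h3⟩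
      refine ⟨h1, h2, ?_⟩
      have hk : k ∈ Finset.Icc 1 n := Finset.mem_Icc.mpr ⟨h1, h2⟩
      exact ((hV k hk).2.2 x ((by exact Set.mem_iInter₂.mp hx k hk))).mpr h3
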